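/- Let T be any [Δ,k]-transversal design where k, Δ ≥ 2 and Δ ≤ k. Let U be any block of T and let t_1, t_2, …, t_Δ be any Δ nodes of T (called target-nodes), where there may be repetitions. Then for each i = 1, 2, …, Δ there is a path π_i in T from U to t_i of length at most 7, so that the paths π_1, …, π_Δ are pairwise internally-disjoint. -/

import Mathlib

/-- The bipartite graph on `ν ⊕ β` (nodes on the left, blocks on the right)
determined by the adjacency relation `adj`. -/
def bipGraph {ν β : Type} (adj : ν → β → Prop) : SimpleGraph (ν ⊕ β) :=
  SimpleGraph.fromRel fun u v => ∃ x b, u = Sum.inl x ∧ v = Sum.inr b ∧ adj x b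

/-- A `[Δ,k]`-transversal design: the nodes form a set of size `Δ * k` partitioned
into `Δ` groups (the fibres of `group`), each of size `k`; there are `k ^ 2` blocks;
every block is adjacent to exactly one node of each group; and every pair of nodes
lying in distinct groups is adjacent to exactly one common block (the block
*generated* by the pair). -/
structure IsTransversalDesign {ν β : Type} (Δ k : ℕ)
    (group : ν → Fin Δ) (adj : ν → β → Prop) : Prop where
  two_le_k : 2 ≤ k
  two_le_Δ : 2 ≤ Δ
  groupCard : ∀ i : Fin Δ, Nat.card {x : ν // group x = i} = k
  blockCard : Nat.card β = k ^ 2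
  blockMeets : ∀ (b : β) (i : Fin Δ), ∃! x : ν, group x = i ∧ adj x b
  pairGen : ∀ x y : ν, group x ≠ group y → ∃! b : β, adj x b ∧ adj y b

/-- A family of walks (with sources `s i` and destinations `t i`) is pairwise
internally-disjoint if every vertex which is a source or destination of some member
of the family appears on members of the family only as their source or destination,
and every vertex which is not a source or destination of any member of the family
lies on at most one member of the family. -/
def PairwiseInternallyDisjoint {V ι : Type} {G : SimpleGraph V} {s t : ι → V}
    (p : (i : ι) → G.Walk (s i) (t i)) : Prop :=
  (∀ i j : ι, ∀ v : V, v ∈ (p i).support → (v = s j ∨ v = t j) → v = s i ∨ v = t i) ∧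
  (∀ i j : ι, ∀ v : V, (∀ l : ι, v ≠ s l ∧ v ≠ t l) →
    v ∈ (p i).support → v ∈ (p j).support → i = j)

/-- A family of walks is pairwise edge-disjoint if every edge lies on at most one
member of the family. -/
def PairwiseEdgeDisjoint {V ι : Type} {G : SimpleGraph V} {s t : ι → V}
    (p : (i : ι) → G.Walk (s i) (t i)) : Prop :=
  ∀ i j : ι, ∀ e : Sym2 V, e ∈ (p i).edges → e ∈ (p j).edges → i = j


/-!
Write `u e` for the node of `U` in group `e`. A target on `U` is reached directly. Any other
target `x` is reached along `U – u e – B – x`, where `B` is the block generated by `u e` and `x`,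
for a group `e ≠ group x` whose node `u e` is not a target. Routes through distinct groups are
internally disjoint because two nodes of `U` generate no block but `U`. There are at least as
many such groups as targets off `U`, so by Hall's theorem they can be assigned injectively,
unless all targets off `U` lie in one group `c` and the count is tight. In that case one target
`x` of group `c` takes the route `U – u c – B – w – C – x` instead, where `C` is a block through
`x` meeting no node of `U`: of the `k ≥ Δ` blocks through `x`, at most `Δ - 1` meet `U`.
-/

open Finset Function

theorem Finset.card_compl_le_card_compl_image {α : Type*} [Fintype α] [DecidableEq α]
    (s : Finset α) (g : α → α) : #sᶜ ≤ #(s.image g)ᶜ := by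
  simp only [card_compl]
  have := card_image_le (s := s) (f := g)
  omega

theorem exists_injective_mem_erase_of_card_le {ι α : Type*} [Fintype ι] [DecidableEq α]
    {G : Finset α} (g : ι → α) (hg : ∀ c, ∃ i, g i ≠ c) (h : Fintype.card ι ≤ #G) :
    ∃ f : ι → α, Injective f ∧ ∀ i, f i ∈ G.erase (g i) := by
  refine (all_card_le_biUnion_card_iff_exists_injective _).mp fun s => ?_
  rcases s.eq_empty_or_nonempty with rfl | ⟨i₀, hi₀⟩
  · simp
  by_cases hs : ∀ i ∈ s, g i = g i₀
  · have hlt : #s < Fintype.card ι := by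
      obtain ⟨i, hi⟩ := hg (g i₀)
      exact card_lt_univ_of_notMem fun his => hi (hs i his)
    have := card_le_card (subset_biUnion_of_mem (fun i => G.erase (g i)) hi₀)
    have := pred_card_le_card_erase (s := G) (a := g i₀)
    omega
  · push Not at hs
    obtain ⟨i₁, hi₁, hne⟩ := hs
    have hG : G ⊆ s.biUnion fun i => G.erase (g i) := fun c hc => by
      by_cases hc₀ : c = g i₀
      · exact mem_biUnion.mpr ⟨i₁, hi₁, mem_erase.mpr ⟨hc₀ ▸ hne.symm, hc⟩⟩
      · exact mem_biUnion.mpr ⟨i₀, hi₀, mem_erase.mpr ⟨hc₀, hc⟩⟩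
    exact (card_le_univ s).trans (h.trans (card_le_card hG))

theorem exists_injective_mem_of_card_le {ι α : Type*} [Fintype ι] [DecidableEq α]
    {G : Finset α} (g : ι → α) (h : Fintype.card ι ≤ #G) :
    ∃ f : ι → α, Injective f ∧ (∀ i, f i ∈ G) ∧ ∀ i, f i = g i → ∀ j, g j = g i := by
  by_cases hg : ∀ c, ∃ i, g i ≠ c
  · obtain ⟨f, hf, hfG⟩ := exists_injective_mem_erase_of_card_le g hg h
    exact ⟨f, hf, fun i => mem_of_mem_erase (hfG i),
      fun i hi => absurd hi (ne_of_mem_erase (hfG i))⟩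
  · push Not at hg
    obtain ⟨c, hc⟩ := hg
    obtain ⟨f, hf⟩ := Function.Embedding.exists_of_card_le_finset h
    exact ⟨f, f.injective, fun i => hf ⟨i, rfl⟩, fun i _ j => (hc j).trans (hc i).symm⟩

theorem SimpleGraph.exists_isPath_pairwiseInternallyDisjoint {V ι : Type} {G : SimpleGraph V}
    {s : V} {t : ι → V} (inner : ι → List V)
    (hchain : ∀ i, (s :: (inner i ++ [t i])).IsChain G.Adj) (hnodup : ∀ i, (inner i).Nodup)
    (hst : ∀ i, s ≠ t i) (hs : ∀ i, s ∉ inner i) (ht : ∀ i j, t j ∉ inner i)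
    (hdisj : ∀ i j, ∀ v ∈ inner i, v ∈ inner j → i = j) :
    ∃ p : (i : ι) → G.Walk s (t i),
      (∀ i, (p i).IsPath ∧ (p i).length = (inner i).length + 1) ∧
        PairwiseInternallyDisjoint p := by
  let p i : G.Walk s (t i) :=
    (Walk.ofSupport _ (List.cons_ne_nil _ _) (hchain i)).copy rfl (by simp)
  have hsupp i : (p i).support = s :: (inner i ++ [t i]) :=
    (Walk.support_copy _ _ _).trans (Walk.support_ofSupport _ _)
  have hinner {i v} (hv : v ∈ (p i).support) (hvs : v ≠ s) (hvt : v ≠ t i) : v ∈ inner i := by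
    simpa [hsupp, hvs, hvt] using hv
  refine ⟨p, fun i => ⟨?_, ?_⟩, ?_, ?_⟩
  · rw [Walk.isPath_def, hsupp]
    have hti : ∀ v ∈ inner i, v ≠ t i := fun v hv h => ht i i (h ▸ hv)
    simp only [List.nodup_cons, List.nodup_append, List.mem_append, List.mem_singleton]
    simpa [hnodup, hst, hs] using hti
  · simpa [p] using congrArg List.length (hsupp i)
  · intro i j v hv hvj
    by_contra! hvi
    have hmem := hinner hv hvi.1 hvi.2
    rcases hvj with rfl | rfl
    exacts [hs i hmem, ht i j hmem]
  · intro i j v hv hvi hvj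
    exact hdisj i j v (hinner hvi (hv i).1 (hv i).2) (hinner hvj (hv j).1 (hv j).2)

open Sum

@[simp]
theorem bipGraph_adj_inl_inr {ν β : Type} {adj : ν → β → Prop} {x : ν} {b : β} :
    (bipGraph adj).Adj (inl x) (inr b) ↔ adj x b := by
  simp [bipGraph]

@[simp]
theorem bipGraph_adj_inr_inl {ν β : Type} {adj : ν → β → Prop} {x : ν} {b : β} :
    (bipGraph adj).Adj (inr b) (inl x) ↔ adj x b := by
  simp [bipGraph]

namespace IsTransversalDesign

variable {ν β ι : Type} {Δ k : ℕ} {group : ν → Fin Δ} {adj : ν → β → Prop}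

theorem eq_of_adj_of_group_eq (hT : IsTransversalDesign Δ k group adj) {b : β} {x y : ν}
    (hx : adj x b) (hy : adj y b) (hxy : group x = group y) : x = y :=
  (hT.blockMeets b (group x)).unique ⟨rfl, hx⟩ ⟨hxy.symm, hy⟩

theorem eq_of_adj_of_group_ne (hT : IsTransversalDesign Δ k group adj) {x y : ν}
    (hxy : group x ≠ group y) {b b' : β} (hx : adj x b) (hy : adj y b) (hx' : adj x b')
    (hy' : adj y b') : b = b' :=
  (hT.pairGen x y hxy).unique ⟨hx, hy⟩ ⟨hx', hy'⟩

theorem exists_remote_block (hT : IsTransversalDesign Δ k group adj) (hΔk : Δ ≤ k) {U : β}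
    {x : ν} (hx : ¬adj x U) {d : Fin Δ} (hd : d ≠ group x) :
    ∃ w C, group w = d ∧ adj x C ∧ adj w C ∧ ∀ y, adj y U → ¬adj y C := by
  classical
  by_contra! h
  have : Finite {w // group w = d} :=
    Nat.finite_of_card_ne_zero (by rw [hT.groupCard d]; have := hT.two_le_k; omega)
  have := Fintype.ofFinite {w // group w = d}
  choose C hxC hwC using fun w : {w // group w = d} =>
    (hT.pairGen x w (by rw [w.2]; exact hd.symm)).exists
  choose y hyU hyC using fun w : {w // group w = d} => h w (C w) w.2 (hxC w) (hwC w)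
  have hy (w : {w // group w = d}) : group (y w) ≠ group x := fun he =>
    hx (hT.eq_of_adj_of_group_eq (hyC w) (hxC w) he ▸ hyU w)
  obtain ⟨w, -, w', -, hww', hyy⟩ := exists_ne_map_eq_of_card_lt_of_maps_to
    (s := univ) (t := univ.erase (group x)) (f := fun w => group (y w))
    (by rw [card_univ, ← Nat.card_eq_fintype_card, hT.groupCard d]; simp; omega)
    fun w _ => by simpa using hy w
  have hyy : y w = y w' := hT.eq_of_adj_of_group_eq (hyU w) (hyU w') hyy
  have hCC : C w = C w' :=
    hT.eq_of_adj_of_group_ne (hy w).symm (hxC w) (hyC w) (hxC w') (hyy ▸ hyC w')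
  exact hww' <| Subtype.ext <|
    hT.eq_of_adj_of_group_eq (hwC w) (hCC ▸ hwC w') (w.2.trans w'.2.symm)

/-- A route through the node of `U` in group `e` has only spoke vertices at `e` inside, except
for the single long route, whose remaining inner vertices are remote. -/
def Spoke (group : ν → Fin Δ) (adj : ν → β → Prop) (U : β) (e : Fin Δ) : ν ⊕ β → Prop
  | inl x => adj x U ∧ group x = e
  | inr B => B ≠ U ∧ ∃ x, adj x U ∧ group x = e ∧ adj x B

def Remote (adj : ν → β → Prop) (U : β) : ν ⊕ β → Prop
  | inl x => ¬adj x U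
  | inr C => ∀ x, adj x U → ¬adj x C

theorem Spoke.unique (hT : IsTransversalDesign Δ k group adj) {U : β} {e e' : Fin Δ}
    {v : ν ⊕ β} (h : Spoke group adj U e v) (h' : Spoke group adj U e' v) : e = e' := by
  cases v with
  | inl x => exact h.2.symm.trans h'.2
  | inr B =>
    obtain ⟨hBU, a, haU, hae, haB⟩ := h
    obtain ⟨-, a', ha'U, ha'e, ha'B⟩ := h'
    by_contra hee
    exact hBU (hT.eq_of_adj_of_group_ne (hae ▸ ha'e ▸ hee) haB ha'B haU ha'U)

theorem Spoke.not_remote {U : β} {e : Fin Δ} {v : ν ⊕ β} (h : Spoke group adj U e v) :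
    ¬Remote adj U v := by
  cases v with
  | inl x => exact fun hx => hx h.1
  | inr B =>
    obtain ⟨-, a, haU, -, haB⟩ := h
    exact fun hB => hB a haU haB

theorem exists_spoke_route (hT : IsTransversalDesign Δ k group adj) {U : β} {t : ι → ν}
    {x : ν} (hx : ¬adj x U) {e : Fin Δ} (hex : e ≠ group x)
    (he : ∀ j, adj (t j) U → group (t j) ≠ e) :
    ∃ l : List (ν ⊕ β), (inr U :: (l ++ [inl x])).IsChain (bipGraph adj).Adj ∧ l.Nodup ∧
      l.length ≤ 4 ∧ ∀ v ∈ l, v ≠ inr U ∧ (∀ j, v ≠ inl (t j)) ∧ Spoke group adj U e v := by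
  obtain ⟨a, ⟨hae, haU⟩, -⟩ := hT.blockMeets U e
  obtain ⟨B, ⟨haB, hxB⟩, -⟩ := hT.pairGen a x (hae ▸ hex)
  have hBU : B ≠ U := by rintro rfl; exact hx hxB
  have hta j : a ≠ t j := by rintro rfl; exact he j haU hae
  have hBa : ∃ y, adj y U ∧ group y = e ∧ adj y B := ⟨a, haU, hae, haB⟩
  refine ⟨[inl a, inr B], by simp [haU, haB, hxB], by simp, by simp, ?_⟩
  simp [Spoke, hBU, hta, haU, hae, hBa]

theorem exists_remote_route (hT : IsTransversalDesign Δ k group adj) (hΔk : Δ ≤ k) {U : β}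
    {t : ι → ν} {x : ν} (hx : ¬adj x U) (hgood : ∀ j, adj (t j) U → group (t j) ≠ group x)
    (hsame : ∀ j, ¬adj (t j) U → group (t j) = group x) :
    ∃ l : List (ν ⊕ β), (inr U :: (l ++ [inl x])).IsChain (bipGraph adj).Adj ∧ l.Nodup ∧
      l.length ≤ 4 ∧ ∀ v ∈ l, v ≠ inr U ∧ (∀ j, v ≠ inl (t j)) ∧
        (Spoke group adj U (group x) v ∨ Remote adj U v) := by
  have := Fin.nontrivial_iff_two_le.mpr hT.two_le_Δ
  obtain ⟨d, hd⟩ := exists_ne (group x)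
  obtain ⟨a, ⟨hax, haU⟩, -⟩ := hT.blockMeets U (group x)
  obtain ⟨w, C, hwd, hxC, hwC, hC⟩ := hT.exists_remote_block hΔk hx hd
  have hwU : ¬adj w U := fun h => hC w h hwC
  obtain ⟨B, ⟨haB, hwB⟩, -⟩ := hT.pairGen a w (by rw [hax, hwd]; exact hd.symm)
  have hBU : B ≠ U := by rintro rfl; exact hwU hwB
  have hCU : C ≠ U := by rintro rfl; exact hx hxC
  have haw : a ≠ w := by rintro rfl; exact hwU haU
  have hBC : B ≠ C := by rintro rfl; exact hC a haU haB
  have hta j : a ≠ t j := by rintro rfl; exact hgood j haU hax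
  have htw j : w ≠ t j := by rintro rfl; exact hd (hwd ▸ hsame j hwU)
  have hBa : ∃ y, adj y U ∧ group y = group x ∧ adj y B := ⟨a, haU, hax, haB⟩
  have hw : Remote adj U (inl w) := hwU
  have hC : Remote adj U (inr C) := hC
  refine ⟨[inl a, inr B, inl w, inr C], by simp [haU, haB, hwB, hwC, hxC], by simp [haw, hBC],
    by simp, ?_⟩
  simp [Spoke, hBU, hCU, hta, htw, haU, hax, hBa, hw, hC]

theorem exists_route (hT : IsTransversalDesign Δ k group adj) (hΔk : Δ ≤ k) {U : β}
    {t : ι → ν} {x : ν} (hx : ¬adj x U) {e : Fin Δ} (he : ∀ j, adj (t j) U → group (t j) ≠ e)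
    (hfix : e = group x → ∀ j, ¬adj (t j) U → group (t j) = group x) :
    ∃ l : List (ν ⊕ β), (inr U :: (l ++ [inl x])).IsChain (bipGraph adj).Adj ∧ l.Nodup ∧
      l.length ≤ 4 ∧ ∀ v ∈ l, v ≠ inr U ∧ (∀ j, v ≠ inl (t j)) ∧
        (Spoke group adj U e v ∨ Remote adj U v ∧ e = group x) := by
  by_cases hex : e = group x
  · subst hex
    obtain ⟨l, hchain, hnodup, hlen, hl⟩ := hT.exists_remote_route hΔk hx he (hfix rfl)
    refine ⟨l, hchain, hnodup, hlen, fun v hv => ?_⟩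
    obtain ⟨hvU, hvt, hv⟩ := hl v hv
    exact ⟨hvU, hvt, hv.imp_right (⟨·, rfl⟩)⟩
  · obtain ⟨l, hchain, hnodup, hlen, hl⟩ := hT.exists_spoke_route hx hex he
    exact ⟨l, hchain, hnodup, hlen, fun v hv => (hl v hv).imp_right (·.imp_right .inl)⟩

theorem exists_disjoint_routes (hT : IsTransversalDesign Δ k group adj) (hΔk : Δ ≤ k)
    {U : β} {t : ι → ν} {f : {i // ¬adj (t i) U} → Fin Δ} (hf_inj : Injective f)
    (hf_good : ∀ i j, adj (t j) U → group (t j) ≠ f i)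
    (hf_fix : ∀ i, f i = group (t i) → ∀ j : {j // ¬adj (t j) U}, group (t j) = group (t i)) :
    ∃ inner : ι → List (ν ⊕ β), (∀ i, (inr U :: (inner i ++ [inl (t i)])).IsChain
      (bipGraph adj).Adj) ∧ (∀ i, (inner i).Nodup) ∧ (∀ i, (inner i).length ≤ 4) ∧
      (∀ i, inr U ∉ inner i) ∧ (∀ i j, inl (t j) ∉ inner i) ∧
      ∀ i j, ∀ v ∈ inner i, v ∈ inner j → i = j := by
  have hroute i : ∃ l : List (ν ⊕ β), (inr U :: (l ++ [inl (t i)])).IsChain (bipGraph adj).Adj ∧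
      l.Nodup ∧ l.length ≤ 4 ∧ ∀ v ∈ l, v ≠ inr U ∧ (∀ j, v ≠ inl (t j)) ∧
        ∃ hi : ¬adj (t i) U, Spoke group adj U (f ⟨i, hi⟩) v ∨
          Remote adj U v ∧ f ⟨i, hi⟩ = group (t i) := by
    by_cases hi : adj (t i) U
    · exact ⟨[], by simpa using hi, by simp, by simp, by simp⟩
    · obtain ⟨l, hchain, hnodup, hlen, hl⟩ := hT.exists_route hΔk hi (hf_good ⟨i, hi⟩)
        (fun h j hj => hf_fix ⟨i, hi⟩ h ⟨j, hj⟩)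
      refine ⟨l, hchain, hnodup, hlen, fun v hv => ?_⟩
      obtain ⟨hvU, hvt, hv⟩ := hl v hv
      exact ⟨hvU, hvt, hi, hv⟩
  choose inner hchain hnodup hlen hinner using hroute
  refine ⟨inner, hchain, hnodup, hlen, fun i h => (hinner i _ h).1 rfl,
    fun i j h => (hinner i _ h).2.1 j rfl, fun i j v hvi hvj => ?_⟩
  obtain ⟨-, -, hi, hvi⟩ := hinner i v hvi
  obtain ⟨-, -, hj, hvj⟩ := hinner j v hvj
  suffices f ⟨i, hi⟩ = f ⟨j, hj⟩ from congrArg Subtype.val (hf_inj this)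
  rcases hvi with hvi | ⟨hvi, hfi⟩ <;> rcases hvj with hvj | ⟨hvj, hfj⟩
  · exact hvi.unique hT hvj
  · exact absurd hvj hvi.not_remote
  · exact absurd hvi hvj.not_remote
  · rw [hfi, hfj, hf_fix _ hfi ⟨j, hj⟩]

end IsTransversalDesign

/-- Let `T` be a `[Δ,k]`-transversal design with `Δ ≤ k`.  Let `U` be
any block and let `t 1, …, t Δ` be any `Δ` nodes (possibly with repetitions).  Then
for each `i` there is a path `p i` from `U` to `t i` of length at most `7`, so that
these paths are pairwise internally-disjoint. -/
theorem transversalDesign_one_to_many_internallyDisjoint {ν β : Type} (Δ k : ℕ)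
    (hΔk : Δ ≤ k)
    (group : ν → Fin Δ) (adj : ν → β → Prop)
    (hT : IsTransversalDesign Δ k group adj)
    (U : β) (t : Fin Δ → ν) :
    ∃ p : (i : Fin Δ) → (bipGraph adj).Walk (Sum.inr U) (Sum.inl (t i)),
      (∀ i, (p i).IsPath ∧ (p i).length ≤ 7) ∧ PairwiseInternallyDisjoint p := by
  classical
  let onU := univ.filter fun i => adj (t i) U
  obtain ⟨f, hf_inj, hf_good, hf_fix⟩ := exists_injective_mem_of_card_le
    (G := (onU.image (group ∘ t))ᶜ) (fun i : {i // ¬adj (t i) U} => group (t i))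
    (by simpa [Fintype.card_subtype, onU, filter_not] using
      card_compl_le_card_compl_image onU (group ∘ t))
  obtain ⟨inner, hchain, hnodup, hlen, hU, ht, hdisj⟩ := hT.exists_disjoint_routes hΔk hf_inj
    (fun i j hj h => mem_compl.mp (hf_good i) (mem_image.mpr ⟨j, by simpa [onU] using hj, h⟩))
    hf_fix
  obtain ⟨p, hp, hpd⟩ := SimpleGraph.exists_isPath_pairwiseInternallyDisjoint inner hchain
    hnodup (fun _ => inr_ne_inl) hU ht hdisj
  exact ⟨p, fun i => ⟨(hp i).1, by have := hlen i; have := (hp i).2; omega⟩, hpd⟩
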